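/- For every left A-module N: (i) the formula (a·φ)(x) = a₍₀₎·φ(S(a₍₁₎) x a₍₋₁₎) defines a left A-module structure on Hom_k(H, N) (i.e. (ab)·φ = a·(b·φ) and 1·φ = φ); (ii) the map u : N → Hom_k(H, N), u(n)(h) = ε(h)n, is A-linear for this structure. -/

import Mathlib

/-!
The action factors through two algebra maps. Because both coactions are algebra maps and the
antipode is an anti-homomorphism, the twisted coaction `a ↦ a₍₀₎ ⊗ S(a₍₁₎)ᵒᵖ ⊗ a₍₋₁₎` is an
algebra map `A → A ⊗ (Hᵐᵒᵖ ⊗ H)`; and `A ⊗ (Hᵐᵒᵖ ⊗ H)` acts on `Hom_k(H, N)` through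
`(c ⊗ u ⊗ v) · φ = c • φ (u * · * v)`, the `A`-part and the `H`-parts acting by commuting
operators. The action of the statement is the composite, so it is multiplicative and unital.
On `φ = ε(·) • n` the element `c ⊗ u ⊗ v` acts as `ε(u) ε(v) c`, and `(id ⊗ ε ⊗ ε)` of the
twisted coaction of `a` is `a` by the two counit axioms and `ε ∘ S = ε`.
-/

open TensorProduct

noncomputable section

variable (k : Type) [Field k]

/-- The curried action of a `k`-algebra `R` on a module `V`, as a `k`-bilinear map. -/
def csmul (R : Type) [Ring R] [Algebra k R] (V : Type) [AddCommGroup V] [Module k V]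
    [Module R V] [IsScalarTower k R V] [SMulCommClass k R V] : R →ₗ[k] V →ₗ[k] V where
  toFun r :=
    { toFun := fun v => r • v
      map_add' := smul_add r
      map_smul' := fun c v => (smul_comm c r v).symm }
  map_add' r r' := LinearMap.ext fun v => add_smul r r' v
  map_smul' c r := LinearMap.ext fun v => smul_assoc c r v

variable (H : Type) [Ring H] [HopfAlgebra k H]

/-- `H ⊗ H →ₗ End_k(H)`, `u ⊗ v ↦ (x ↦ u * x * v)`. -/
def sandwich : H ⊗[k] H →ₗ[k] (H →ₗ[k] H) :=
  (TensorProduct.lift (LinearMap.llcomp k H H H)) ∘ₗ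
    (TensorProduct.map (LinearMap.mul k H) (LinearMap.mul k H).flip)

/-- `H ⊗ H →ₗ End_k(Hom_k(H, W))`, `u ⊗ v ↦ (φ ↦ (x ↦ φ (u * x * v)))`. -/
def sandwichHom (W : Type) [AddCommGroup W] [Module k W] :
    H ⊗[k] H →ₗ[k] (H →ₗ[k] W) →ₗ[k] (H →ₗ[k] W) :=
  (LinearMap.llcomp k H H W).flip ∘ₗ sandwich k H

variable (A : Type) [Ring A] [Algebra k A]
variable (ρ : A →ₐ[k] A ⊗[k] H) (lco : A →ₐ[k] H ⊗[k] A)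

/-- `A →ₗ A ⊗ (H ⊗ H)`, `a ↦ a₍₀₎ ⊗ (S(a₍₁₎) ⊗ a₍₋₁₎)`. -/
def deltaS : A →ₗ[k] A ⊗[k] (H ⊗[k] H) :=
  (LinearMap.lTensor A (LinearMap.rTensor H (HopfAlgebra.antipode (R := k)))) ∘ₗ
    (LinearMap.lTensor A (TensorProduct.comm k H H).toLinearMap) ∘ₗ
    (TensorProduct.assoc k A H H).toLinearMap ∘ₗ
    (LinearMap.rTensor H (TensorProduct.comm k H A).toLinearMap) ∘ₗ
    (LinearMap.rTensor H lco.toLinearMap) ∘ₗ ρ.toLinearMap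

/-- Given a curried action `ν : A →ₗ End_k(W)`, the induced action of `A` on `Hom_k(H, W)`:
`(a · φ)(x) = ν(a₍₀₎) (φ (S(a₍₁₎) * x * a₍₋₁₎))`. -/
def liftAct (W : Type) [AddCommGroup W] [Module k W] (ν : A →ₗ[k] W →ₗ[k] W) :
    A →ₗ[k] (H →ₗ[k] W) →ₗ[k] (H →ₗ[k] W) :=
  (TensorProduct.lift
      (((LinearMap.llcomp k (H →ₗ[k] W) (H →ₗ[k] W) (H →ₗ[k] W)).comp
          ((LinearMap.llcomp k H W W) ∘ₗ ν)).compl₂ (sandwichHom k H W))) ∘ₗ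
    deltaS k H A ρ lco

end

@[simp]
lemma MulOpposite.counit_op {k C : Type*} [CommSemiring k] [AddCommMonoid C] [Module k C]
    [CoalgebraStruct k C] (x : C) :
    Coalgebra.counit (R := k) (MulOpposite.op x) = Coalgebra.counit x := rfl

section Precomposition

variable (k : Type*) [CommSemiring k]

noncomputable def precompAlgHom (M W : Type*) [AddCommMonoid M] [Module k M] [AddCommMonoid W]
    [Module k W] : (Module.End k M)ᵐᵒᵖ →ₐ[k] Module.End k (M →ₗ[k] W) :=
  AlgHom.ofLinearMap
    ((LinearMap.llcomp k M M W).flip ∘ₗ (MulOpposite.opLinearEquiv k).symm.toLinearMap)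
    rfl (fun _ _ => rfl)

@[simp]
lemma precompAlgHom_apply {M W : Type*} [AddCommMonoid M] [Module k M] [AddCommMonoid W]
    [Module k W] (f : (Module.End k M)ᵐᵒᵖ) (φ : M →ₗ[k] W) :
    precompAlgHom k M W f φ = φ ∘ₗ f.unop := rfl

variable (H : Type*) [Semiring H] [Algebra k H]

noncomputable def mulLeftRightAlgHom : Hᵐᵒᵖ ⊗[k] H →ₐ[k] (Module.End k H)ᵐᵒᵖ :=
  Algebra.TensorProduct.lift (AlgHom.op (Algebra.lmul k H))
    (AlgHom.opComm.symm (Algebra.lsmul k k H))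
    (fun u v => MulOpposite.commute_unop.mp <| LinearMap.ext fun x => by simp [mul_assoc])

@[simp]
lemma mulLeftRightAlgHom_tmul_apply (u : Hᵐᵒᵖ) (v x : H) :
    (mulLeftRightAlgHom k H (u ⊗ₜ v)).unop x = u.unop * x * v := by
  simp [mulLeftRightAlgHom, mul_assoc]

end Precomposition

section Action

variable (k : Type*) [CommSemiring k] (A : Type*) [Semiring A] [Algebra k A]
  (N : Type*) [AddCommMonoid N] [Module k N] [Module A N] [IsScalarTower k A N]
  [SMulCommClass k A N]

lemma lsmul_commute_precompAlgHom {M : Type*} [AddCommMonoid M] [Module k M] (a : A)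
    (f : (Module.End k M)ᵐᵒᵖ) :
    Commute (Algebra.lsmul k k (M →ₗ[k] N) a) (precompAlgHom k M N f) :=
  LinearMap.ext fun φ => (LinearMap.smul_comp a φ f.unop).symm

noncomputable def smulPrecompAlgHom (M : Type*) [AddCommMonoid M] [Module k M] :
    A ⊗[k] (Module.End k M)ᵐᵒᵖ →ₐ[k] Module.End k (M →ₗ[k] N) :=
  Algebra.TensorProduct.lift (Algebra.lsmul k k (M →ₗ[k] N)) (precompAlgHom k M N)
    (lsmul_commute_precompAlgHom k A N)

noncomputable def sandwichAction (H : Type*) [Semiring H] [Algebra k H] :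
    A ⊗[k] (Hᵐᵒᵖ ⊗[k] H) →ₐ[k] Module.End k (H →ₗ[k] N) :=
  (smulPrecompAlgHom k A N H).comp
    (Algebra.TensorProduct.map (AlgHom.id k A) (mulLeftRightAlgHom k H))

variable {k A N}

lemma sandwichAction_tmul_apply {H : Type*} [Semiring H] [Algebra k H] (a : A) (u : Hᵐᵒᵖ)
    (v : H) (φ : H →ₗ[k] N) (x : H) :
    sandwichAction k A N H (a ⊗ₜ (u ⊗ₜ v)) φ x = a • φ (u.unop * x * v) := by
  simp [sandwichAction, smulPrecompAlgHom]

lemma sandwichAction_smulRight_counit {H : Type*} [Semiring H] [Bialgebra k H]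
    (s : A ⊗[k] (Hᵐᵒᵖ ⊗[k] H)) (n : N) :
    sandwichAction k A N H s (Coalgebra.counit.smulRight n) =
      Coalgebra.counit.smulRight
        (TensorProduct.rid k A (LinearMap.lTensor A Coalgebra.counit s) • n) := by
  induction s using TensorProduct.induction_on with
  | zero => ext; simp
  | add s s' hs hs' => ext; simp [hs, hs', add_smul]
  | tmul a t =>
    induction t using TensorProduct.induction_on with
    | zero => ext; simp
    | add t t' ht ht' => ext; simp [tmul_add, ht, ht', add_smul]
    | tmul u v =>
      induction u using MulOpposite.rec'
      ext x
      simp only [sandwichAction_tmul_apply, LinearMap.smulRight_apply, Bialgebra.counit_mul,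
        LinearMap.lTensor_tmul, counit_tmul, TensorProduct.rid_tmul, MulOpposite.unop_op,
        MulOpposite.counit_op, smul_assoc, smul_smul, smul_eq_mul]
      rw [smul_comm a]
      ring_nf

end Action

section Coaction

variable {k : Type*} [CommSemiring k] {H : Type*} [Semiring H] [HopfAlgebra k H]
  {A : Type*} [Semiring A] [Algebra k A]

noncomputable def twistedCoaction (ρ : A →ₐ[k] A ⊗[k] H) (lco : A →ₐ[k] H ⊗[k] A) :
    A →ₐ[k] A ⊗[k] (Hᵐᵒᵖ ⊗[k] H) :=
  (Algebra.TensorProduct.map (AlgHom.id k A)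
      (Algebra.TensorProduct.map (HopfAlgebra.antipodeAlgHomOp k H) (AlgHom.id k H))).comp <|
    (Algebra.TensorProduct.map (AlgHom.id k A) (Algebra.TensorProduct.comm k H H).toAlgHom).comp <|
    (Algebra.TensorProduct.assoc k k k A H H).toAlgHom.comp <|
    (Algebra.TensorProduct.map (Algebra.TensorProduct.comm k H A).toAlgHom (AlgHom.id k H)).comp <|
    (Algebra.TensorProduct.map lco (AlgHom.id k H)).comp ρ

lemma rid_lTensor_counit_twistedCoaction (ρ : A →ₐ[k] A ⊗[k] H) (lco : A →ₐ[k] H ⊗[k] A)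
    (hρ_counit : (TensorProduct.rid k A).toLinearMap ∘ₗ
        (LinearMap.lTensor A Coalgebra.counit) ∘ₗ ρ.toLinearMap = LinearMap.id)
    (hlco_counit : (TensorProduct.lid k A).toLinearMap ∘ₗ
        (LinearMap.rTensor A Coalgebra.counit) ∘ₗ lco.toLinearMap = LinearMap.id) (a : A) :
    TensorProduct.rid k A (LinearMap.lTensor A Coalgebra.counit (twistedCoaction ρ lco a)) = a := by
  have hlco (b : A) := LinearMap.congr_fun hlco_counit b
  have hρ := LinearMap.congr_fun hρ_counit a
  simp only [LinearMap.comp_apply, LinearEquiv.coe_coe, AlgHom.toLinearMap_apply,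
    LinearMap.id_apply] at hlco hρ
  conv_rhs => rw [← hρ]
  simp only [twistedCoaction, AlgHom.comp_apply]
  generalize ρ a = t
  induction t using TensorProduct.induction_on with
  | zero => simp
  | add t t' ht ht' => simp only [map_add, ht, ht']
  | tmul b h =>
    conv_rhs => rw [LinearMap.lTensor_tmul, TensorProduct.rid_tmul, ← hlco b]
    simp only [Algebra.TensorProduct.map_tmul, AlgHom.id_apply]
    generalize lco b = s
    induction s using TensorProduct.induction_on with
    | zero => simp
    | add s s' hs hs' => simp only [add_tmul, map_add, hs, hs', smul_add]
    | tmul h' c =>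
      simp [smul_smul, mul_comm]

end Coaction

section LiftAct

variable {k : Type} [Field k] {H : Type} [Ring H] [HopfAlgebra k H]
  {A : Type} [Ring A] [Algebra k A]
  {N : Type} [AddCommGroup N] [Module k N] [Module A N] [IsScalarTower k A N]
  [SMulCommClass k A N]

lemma liftAct_eq_sandwichAction_comp (ρ : A →ₐ[k] A ⊗[k] H) (lco : A →ₐ[k] H ⊗[k] A) :
    liftAct k H A ρ lco N (csmul k A N) =
      ((sandwichAction k A N H).comp (twistedCoaction ρ lco)).toLinearMap := by
  ext1 a
  simp only [liftAct, deltaS, twistedCoaction, LinearMap.comp_apply, AlgHom.toLinearMap_apply,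
    AlgHom.comp_apply]
  generalize ρ a = t
  induction t using TensorProduct.induction_on with
  | zero => simp
  | add t t' ht ht' => simp only [map_add, ht, ht']
  | tmul b h =>
    simp only [LinearMap.rTensor_tmul, Algebra.TensorProduct.map_tmul, AlgHom.toLinearMap_apply]
    generalize lco b = s
    induction s using TensorProduct.induction_on with
    | zero => simp
    | add s s' hs hs' => simp only [add_tmul, map_add, hs, hs']
    | tmul h' c =>
      ext φ x
      simp [sandwichAction_tmul_apply, sandwichHom, sandwich, csmul, mul_assoc]

end LiftAct

section

variable (k : Type) [Field k]
variable (H : Type) [Ring H] [HopfAlgebra k H]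
variable (A : Type) [Ring A] [Algebra k A]
variable (ρ : A →ₐ[k] A ⊗[k] H) (lco : A →ₐ[k] H ⊗[k] A)
variable (N : Type) [AddCommGroup N] [Module k N] [Module A N]
  [IsScalarTower k A N] [SMulCommClass k A N]

theorem stmt5
    (hρ_counit : (TensorProduct.rid k A).toLinearMap ∘ₗ
        (LinearMap.lTensor A Coalgebra.counit) ∘ₗ ρ.toLinearMap = LinearMap.id)
    (hlco_counit : (TensorProduct.lid k A).toLinearMap ∘ₗ
        (LinearMap.rTensor A Coalgebra.counit) ∘ₗ lco.toLinearMap = LinearMap.id) :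
    -- (i) the formula defines a left `A`-module structure on `Hom_k(H, N)`
    ((∀ a b : A, liftAct k H A ρ lco N (csmul k A N) (a * b) =
        liftAct k H A ρ lco N (csmul k A N) a ∘ₗ liftAct k H A ρ lco N (csmul k A N) b)
      ∧ liftAct k H A ρ lco N (csmul k A N) 1 = LinearMap.id)
    -- (ii) `u(n)(h) = ε(h) • n` is `A`-linear
    ∧ (∀ (a : A) (n : N),
        liftAct k H A ρ lco N (csmul k A N) a
            ((Coalgebra.counit (R := k) (A := H)).smulRight n) =
          (Coalgebra.counit (R := k) (A := H)).smulRight (a • n)) := by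
  simp only [liftAct_eq_sandwichAction_comp, AlgHom.toLinearMap_apply]
  refine ⟨⟨fun a b => ?_, ?_⟩, fun a n => ?_⟩
  · rw [map_mul, Module.End.mul_eq_comp]
  · rw [map_one, Module.End.one_eq_id]
  · rw [AlgHom.comp_apply, sandwichAction_smulRight_counit,
      rid_lTensor_counit_twistedCoaction ρ lco hρ_counit hlco_counit]

end
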